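/- arXiv:2402.18059 — 2 statements merged into one kernel-verified Lean document; each statement's English description precedes it below -/
import Mathlib

section
/- Let g = λ* g_D + (1-λ*) g_S where λ* minimizes ‖λ g_D + (1-λ) g_S‖ over λ ∈ [0,1], and suppose g ≠ 0. Then ⟨g, g_D⟩ ≥ ‖g‖² and ⟨g, g_S⟩ ≥ ‖g‖²; in particular, -g is a descent direction for both objectives whose gradients are g_D and g_S. -/
/-! The minimum-norm point `g` of a convex set `K` is the projection of `0` onto `K`, so the
variational characterisation of projections gives `⟪-g, x - g⟫ ≤ 0`, i.e. `‖g‖² ≤ ⟪g, x⟫`, for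
every `x ∈ K`. Applied to the segment `[g_S, g_D]` and its endpoints, this bounds both inner
products below by `‖g‖² > 0`. -/

open RealInnerProductSpace

theorem IsMinOn.norm_sq_le_inner {F : Type*} [NormedAddCommGroup F] [InnerProductSpace ℝ F]
    {K : Set F} (hK : Convex ℝ K) {g x : F} (hgK : g ∈ K) (hmin : IsMinOn (‖·‖) K g)
    (hx : x ∈ K) : ‖g‖ ^ 2 ≤ ⟪g, x⟫ := by
  have hproj : ‖0 - g‖ = ⨅ w : K, ‖0 - (w : F)‖ := by
    simp only [zero_sub, norm_neg]
    exact (hmin.iInf_eq hgK).symm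
  have hvar := (norm_eq_iInf_iff_real_inner_le_zero hK hgK).1 hproj x hx
  rw [zero_sub, inner_neg_left, inner_sub_right, real_inner_self_eq_norm_sq] at hvar
  linarith

theorem isMinOn_segment_of_forall_mem_Icc {F β : Type*} [AddCommGroup F] [Module ℝ F]
    [Preorder β] (f : F → β) {x y : F} {l : ℝ}
    (hmin : ∀ l' ∈ Set.Icc (0:ℝ) 1, f (l • y + (1 - l) • x) ≤ f (l' • y + (1 - l') • x)) :
    IsMinOn f (segment ℝ x y) (l • y + (1 - l) • x) := by
  rw [segment_eq_image, isMinOn_iff, Set.forall_mem_image]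
  intro θ hθ
  rw [add_comm ((1 - θ) • x)]
  exact hmin θ hθ

theorem mgda_common_descent {n : ℕ} (gD gS : EuclideanSpace ℝ (Fin n))
    (l : ℝ) (hl : l ∈ Set.Icc (0:ℝ) 1)
    (hmin : ∀ l' ∈ Set.Icc (0:ℝ) 1,
      ‖l • gD + (1 - l) • gS‖ ≤ ‖l' • gD + (1 - l') • gS‖)
    (g : EuclideanSpace ℝ (Fin n)) (hg : g = l • gD + (1 - l) • gS)
    (hne : g ≠ 0) :
    ⟪g, gD⟫ ≥ ‖g‖^2 ∧ ⟪g, gS⟫ ≥ ‖g‖^2 ∧ ⟪gD, -g⟫ < 0 ∧ ⟪gS, -g⟫ < 0 := by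
  have hgK : g ∈ segment ℝ gS gD :=
    hg ▸ ⟨1 - l, l, sub_nonneg.2 hl.2, hl.1, sub_add_cancel 1 l, add_comm _ _⟩
  have hgmin : IsMinOn (‖·‖) (segment ℝ gS gD) g :=
    hg ▸ isMinOn_segment_of_forall_mem_Icc _ hmin
  have hD := hgmin.norm_sq_le_inner (convex_segment gS gD) hgK (right_mem_segment ℝ gS gD)
  have hS := hgmin.norm_sq_le_inner (convex_segment gS gD) hgK (left_mem_segment ℝ gS gD)
  have hpos : 0 < ‖g‖ ^ 2 := by positivity
  refine ⟨hD, hS, ?_, ?_⟩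
  · rw [inner_neg_right, real_inner_comm]; linarith
  · rw [inner_neg_right, real_inner_comm]; linarith
end

section
/- Given logits l_v for v in a finite vocabulary V, green-membership probabilities ŷ_v ∈ [0,1], and δ ≥ 0, define modified logits l̂_v = l_v + ŷ_v δ. Then the softmax probability mass of the exactly-green tokens, ∑_{v: ŷ_v = 1} exp(l̂_v)/∑_{w∈V} exp(l̂_w), is monotonically non-decreasing in δ. -/
/-!
Raising `δ₁` to `δ₂` multiplies the weight `exp (l v + ŷ v * δ)` of every green token by exactly
`exp (δ₂ - δ₁)` and, since `ŷ ≤ 1`, every other weight by at most that factor; so the green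
share of the total weight can only grow.
-/

open scoped Classical

theorem div_le_div_of_eq_mul_of_le_mul {α : Type*} [Field α] [LinearOrder α]
    [IsStrictOrderedRing α] {a b a' b' c : α} (ha : 0 ≤ a) (hb : 0 < b) (hb' : 0 < b')
    (ha' : a' = c * a) (hb'c : b' ≤ c * b) : a / b ≤ a' / b' := by
  rw [div_le_div_iff₀ hb hb', ha']
  calc a * b' ≤ a * (c * b) := mul_le_mul_of_nonneg_left hb'c ha
    _ = c * a * b := by ring

theorem Real.exp_add_mul_le_exp_sub_mul_exp_add_mul {y δ δ' : ℝ} (l : ℝ) (hy : y ≤ 1)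
    (hδ : δ ≤ δ') : Real.exp (l + y * δ') ≤ Real.exp (δ' - δ) * Real.exp (l + y * δ) := by
  rw [← Real.exp_add, Real.exp_le_exp]
  nlinarith

theorem green_mass_monotone_in_delta_general {V : Type*} [Fintype V] [Nonempty V]
    (l : V → ℝ) (yhat : V → ℝ) (hy : ∀ v, yhat v ∈ Set.Icc (0:ℝ) 1)
    (δ₁ δ₂ : ℝ) (h₂ : δ₁ ≤ δ₂) :
    (∑ v ∈ Finset.univ.filter (fun v => yhat v = 1), Real.exp (l v + yhat v * δ₁)) /
      (∑ w, Real.exp (l w + yhat w * δ₁)) ≤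
    (∑ v ∈ Finset.univ.filter (fun v => yhat v = 1), Real.exp (l v + yhat v * δ₂)) /
      (∑ w, Real.exp (l w + yhat w * δ₂)) := by
  have total_pos : ∀ δ, 0 < ∑ w, Real.exp (l w + yhat w * δ) := fun δ =>
    Finset.sum_pos (fun w _ => Real.exp_pos _) Finset.univ_nonempty
  refine div_le_div_of_eq_mul_of_le_mul (c := Real.exp (δ₂ - δ₁))
    (Finset.sum_nonneg fun v _ => (Real.exp_pos _).le) (total_pos δ₁) (total_pos δ₂) ?_ ?_
  · rw [Finset.mul_sum]
    refine Finset.sum_congr rfl fun v hv => ?_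
    rw [(Finset.mem_filter.mp hv).2, ← Real.exp_add]
    ring_nf
  · rw [Finset.mul_sum]
    exact Finset.sum_le_sum fun w _ =>
      Real.exp_add_mul_le_exp_sub_mul_exp_add_mul _ (hy w).2 h₂

theorem green_mass_monotone_in_delta {V : Type*} [Fintype V] [Nonempty V]
    (l : V → ℝ) (yhat : V → ℝ) (hy : ∀ v, yhat v ∈ Set.Icc (0:ℝ) 1)
    (δ₁ δ₂ : ℝ) (h₁ : 0 ≤ δ₁) (h₂ : δ₁ ≤ δ₂) :
    (∑ v ∈ Finset.univ.filter (fun v => yhat v = 1), Real.exp (l v + yhat v * δ₁)) /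
      (∑ w, Real.exp (l w + yhat w * δ₁)) ≤
    (∑ v ∈ Finset.univ.filter (fun v => yhat v = 1), Real.exp (l v + yhat v * δ₂)) /
      (∑ w, Real.exp (l w + yhat w * δ₂)) :=
  green_mass_monotone_in_delta_general l yhat hy δ₁ δ₂ h₂
end
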